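/- arXiv:1404.1971 — 4 statements merged into one kernel-verified Lean document; each statement's English description precedes it below -/
import Mathlib

section
/- Let X be a finite-dimensional real inner product space, A a symmetric positive definite linear operator on X, and J an antisymmetric linear operator on X with -J^2 ≤ cA (in the sense of symmetric operators). Let Y be another inner product space and P : X → Y linear with N·P·Pᵗ = id_Y. Define Ā by Ā⁻¹ = P A⁻¹ N Pᵗ. Then for every y ∈ Y, |P J A⁻¹ N Pᵗ y|² ≤ c ⟨Ā⁻¹ y, y⟩. -/
open Matrix

/-- Projection inequality: if N • (P * Pᵀ) = 1 then N * |P u|² ≤ |u|². -/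
lemma proj_ineq_aux {N M : ℕ} (P : Matrix (Fin M) (Fin N) ℝ)
    (hP : (N : ℝ) • (P * Pᵀ) = 1) (u : Fin N → ℝ) :
    (N : ℝ) * ((P *ᵥ u) ⬝ᵥ (P *ᵥ u)) ≤ u ⬝ᵥ u := by
  set Q : Matrix (Fin N) (Fin N) ℝ := (N : ℝ) • (Pᵀ * P) with hQdef
  have hQsymm : Qᵀ = Q := by
    simp [hQdef, transpose_smul, transpose_mul]
  have hQ2 : Q * Q = Q := by
    have h1 : Q * Q = (N : ℝ) • (Pᵀ * ((N : ℝ) • (P * Pᵀ)) * P) := by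
      simp only [hQdef, Matrix.smul_mul, Matrix.mul_smul, Matrix.mul_assoc, smul_smul]
    rw [h1, hP]
    simp [hQdef, Matrix.mul_assoc]
  set R : Matrix (Fin N) (Fin N) ℝ := 1 - Q with hRdef
  have hRsymm : Rᵀ = R := by simp [hRdef, transpose_sub, hQsymm]
  have hR2 : R * R = R := by
    simp [hRdef, Matrix.sub_mul, Matrix.mul_sub, hQ2]
  have hRpos : 0 ≤ u ⬝ᵥ (R *ᵥ u) := by
    have h1 : u ⬝ᵥ (R *ᵥ u) = (R *ᵥ u) ⬝ᵥ (R *ᵥ u) := by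
      conv_rhs => rw [Matrix.dotProduct_mulVec, ← Matrix.mulVec_transpose, hRsymm,
        Matrix.mulVec_mulVec, hR2]
      exact dotProduct_comm _ _
    rw [h1]
    exact Finset.sum_nonneg fun i _ => mul_self_nonneg _
  have hQval : u ⬝ᵥ (Q *ᵥ u) = (N : ℝ) * ((P *ᵥ u) ⬝ᵥ (P *ᵥ u)) := by
    rw [hQdef, Matrix.smul_mulVec, dotProduct_smul, smul_eq_mul,
      ← Matrix.mulVec_mulVec, Matrix.dotProduct_mulVec, Matrix.vecMul_transpose]
  have hsub : u ⬝ᵥ (R *ᵥ u) = u ⬝ᵥ u - u ⬝ᵥ (Q *ᵥ u) := by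
    simp [hRdef, Matrix.sub_mulVec, dotProduct_sub]
  rw [hsub, hQval] at hRpos
  linarith

/-- Lemma 3.2 (eq: ineq1, first inequality): |P J A⁻¹ N Pᵗ y|² ≤ c ⟨Ā⁻¹ y, y⟩. -/
theorem stmt_0 {N M : ℕ} (c : ℝ) (hc : 0 < c)
    (A J : Matrix (Fin N) (Fin N) ℝ) (P : Matrix (Fin M) (Fin N) ℝ)
    (hA_symm : A.IsSymm) (hA_unit : IsUnit A.det)
    (hA_pos : ∀ x : Fin N → ℝ, x ≠ 0 → 0 < x ⬝ᵥ A.mulVec x)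
    (hJ_anti : Jᵀ = -J)
    (hJA : ∀ x : Fin N → ℝ, 0 ≤ x ⬝ᵥ ((c • A + J * J).mulVec x))
    (hP : (N : ℝ) • (P * Pᵀ) = 1) :
    ∀ y : Fin M → ℝ,
      (((N : ℝ) • (P * J * A⁻¹ * Pᵀ)).mulVec y) ⬝ᵥ (((N : ℝ) • (P * J * A⁻¹ * Pᵀ)).mulVec y)
        ≤ c * ((((N : ℝ) • (P * A⁻¹ * Pᵀ)).mulVec y) ⬝ᵥ y) := by
  intro y
  rcases Nat.eq_zero_or_pos N with hN | hN
  · subst hN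
    simp
  have hNpos : (0 : ℝ) < (N : ℝ) := by exact_mod_cast hN
  set x : Fin N → ℝ := (N : ℝ) • (A⁻¹ *ᵥ (Pᵀ *ᵥ y)) with hxdef
  -- A *ᵥ x = N • (Pᵀ *ᵥ y)
  have hAx : A *ᵥ x = (N : ℝ) • (Pᵀ *ᵥ y) := by
    rw [hxdef, Matrix.mulVec_smul, Matrix.mulVec_mulVec, Matrix.mul_nonsing_inv A hA_unit]
    simp
  -- vector forms
  have hLvec : ((N : ℝ) • (P * J * A⁻¹ * Pᵀ)) *ᵥ y = P *ᵥ (J *ᵥ x) := by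
    rw [hxdef]
    simp only [Matrix.mulVec_smul, Matrix.mulVec_mulVec, Matrix.smul_mulVec,
      Matrix.mul_assoc]
  have hRvec : ((N : ℝ) • (P * A⁻¹ * Pᵀ)) *ᵥ y = P *ᵥ x := by
    rw [hxdef]
    simp only [Matrix.mulVec_smul, Matrix.mulVec_mulVec, Matrix.smul_mulVec,
      Matrix.mul_assoc]
  -- RHS value
  have hRHS : (((N : ℝ) • (P * A⁻¹ * Pᵀ)) *ᵥ y) ⬝ᵥ y = ((N : ℝ))⁻¹ * (x ⬝ᵥ (A *ᵥ x)) := by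
    rw [hRvec, dotProduct_comm, Matrix.dotProduct_mulVec, ← Matrix.mulVec_transpose,
      dotProduct_comm, hAx]
    rw [dotProduct_smul, smul_eq_mul, ← mul_assoc, inv_mul_cancel₀ (ne_of_gt hNpos), one_mul]
  -- |J x|² ≤ c * (x ⬝ᵥ A x)
  have hJx : (J *ᵥ x) ⬝ᵥ (J *ᵥ x) ≤ c * (x ⬝ᵥ (A *ᵥ x)) := by
    have h1 : (J *ᵥ x) ⬝ᵥ (J *ᵥ x) = -(x ⬝ᵥ ((J * J) *ᵥ x)) := by
      rw [← Matrix.mulVec_mulVec, dotProduct_comm, Matrix.dotProduct_mulVec,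
        ← Matrix.mulVec_transpose, hJ_anti]
      rw [dotProduct_comm]
      simp [Matrix.neg_mulVec, dotProduct_neg, Matrix.mulVec_mulVec]
    have h2 := hJA x
    rw [Matrix.add_mulVec, dotProduct_add, Matrix.smul_mulVec, dotProduct_smul] at h2
    rw [h1]
    simp only [smul_eq_mul] at h2
    linarith
  -- projection inequality
  have hproj := proj_ineq_aux P hP (J *ᵥ x)
  -- combine
  rw [hLvec, hRHS]
  have hxA : 0 ≤ x ⬝ᵥ (A *ᵥ x) := by
    rcases eq_or_ne x 0 with h | h
    · simp [h]
    · exact le_of_lt (hA_pos x h)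
  have h3 : (P *ᵥ (J *ᵥ x)) ⬝ᵥ (P *ᵥ (J *ᵥ x)) ≤ (N : ℝ)⁻¹ * ((J *ᵥ x) ⬝ᵥ (J *ᵥ x)) := by
    rw [inv_mul_eq_div, le_div_iff₀ hNpos, mul_comm]
    exact hproj
  calc (P *ᵥ (J *ᵥ x)) ⬝ᵥ (P *ᵥ (J *ᵥ x))
      ≤ (N : ℝ)⁻¹ * ((J *ᵥ x) ⬝ᵥ (J *ᵥ x)) := h3
    _ ≤ (N : ℝ)⁻¹ * (c * (x ⬝ᵥ (A *ᵥ x))) := by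
        apply mul_le_mul_of_nonneg_left hJx (le_of_lt (inv_pos.mpr hNpos))
    _ = c * ((N : ℝ)⁻¹ * (x ⬝ᵥ (A *ᵥ x))) := by ring
end

section
/- With the same setup, if additionally A ≥ τ·id for some τ > 0, then ⟨Ā⁻¹ y, y⟩ ≤ (1/τ)|y|² for all y ∈ Y, and hence |P J A⁻¹ N Pᵗ y|² ≤ (c/τ)|y|². -/
open Matrix

private lemma dot_self_nonneg {k : ℕ} (v : Fin k → ℝ) : 0 ≤ v ⬝ᵥ v :=
  Finset.sum_nonneg fun i _ => mul_self_nonneg _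

private lemma dot_cs {k : ℕ} (v w : Fin k → ℝ) :
    (v ⬝ᵥ w) ^ 2 ≤ (v ⬝ᵥ v) * (w ⬝ᵥ w) := by
  simpa [dotProduct, sq] using Finset.sum_mul_sq_le_sq_mul_sq Finset.univ v w

private lemma mulVec_dot {m n : ℕ} (B : Matrix (Fin m) (Fin n) ℝ) (v : Fin n → ℝ)
    (x : Fin m → ℝ) : (B *ᵥ v) ⬝ᵥ x = v ⬝ᵥ (Bᵀ *ᵥ x) := by
  rw [dotProduct_comm, dotProduct_mulVec, ← mulVec_transpose]
  exact dotProduct_comm _ _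

/-- Lemma 3.2 (eq: ineq1, second inequality): if A ≥ τ·id then
⟨Ā⁻¹y, y⟩ ≤ (1/τ)|y|², hence |P J A⁻¹ N Pᵗ y|² ≤ (c/τ)|y|². -/
theorem stmt_1 {N M : ℕ} (c τ : ℝ) (hc : 0 < c) (hτ : 0 < τ)
    (A J : Matrix (Fin N) (Fin N) ℝ) (P : Matrix (Fin M) (Fin N) ℝ)
    (hA_symm : A.IsSymm) (hA_unit : IsUnit A.det)
    (hA_pos : ∀ x : Fin N → ℝ, x ≠ 0 → 0 < x ⬝ᵥ A.mulVec x)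
    (hA_tau : ∀ x : Fin N → ℝ, τ * (x ⬝ᵥ x) ≤ x ⬝ᵥ A.mulVec x)
    (hJ_anti : Jᵀ = -J)
    (hJA : ∀ x : Fin N → ℝ, 0 ≤ x ⬝ᵥ ((c • A + J * J).mulVec x))
    (hP : (N : ℝ) • (P * Pᵀ) = 1) :
    ∀ y : Fin M → ℝ,
      ((((N : ℝ) • (P * A⁻¹ * Pᵀ)).mulVec y) ⬝ᵥ y ≤ (1 / τ) * (y ⬝ᵥ y)) ∧
      ((((N : ℝ) • (P * J * A⁻¹ * Pᵀ)).mulVec y) ⬝ᵥ (((N : ℝ) • (P * J * A⁻¹ * Pᵀ)).mulVec y)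
        ≤ (c / τ) * (y ⬝ᵥ y)) := by
  intro y
  have hN0 : (0:ℝ) ≤ (N:ℝ) := Nat.cast_nonneg N
  set u : Fin N → ℝ := Pᵀ *ᵥ y with hu
  set w : Fin N → ℝ := A⁻¹ *ᵥ u with hw
  have hAw : A *ᵥ w = u := by
    rw [hw, mulVec_mulVec, Matrix.mul_nonsing_inv A hA_unit, one_mulVec]
  set a : ℝ := w ⬝ᵥ u with ha
  -- τ (w⬝w) ≤ a
  have ha1 : τ * (w ⬝ᵥ w) ≤ a := by
    have := hA_tau w; rwa [hAw] at this
  have ha0 : 0 ≤ a := le_trans (mul_nonneg hτ.le (dot_self_nonneg w)) ha1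
  -- Cauchy–Schwarz gives τ a ≤ u⬝u
  have hcs : a ^ 2 ≤ (w ⬝ᵥ w) * (u ⬝ᵥ u) := dot_cs w u
  have hτa : τ * a ≤ u ⬝ᵥ u := by
    rcases eq_or_lt_of_le ha0 with h | h
    · have huu := dot_self_nonneg u
      nlinarith
    · have h1 : τ * a ^ 2 ≤ a * (u ⬝ᵥ u) := by
        calc τ * a ^ 2 ≤ τ * ((w ⬝ᵥ w) * (u ⬝ᵥ u)) := by
              exact mul_le_mul_of_nonneg_left hcs hτ.le
          _ ≤ a * (u ⬝ᵥ u) := by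
              have := mul_le_mul_of_nonneg_right ha1 (dot_self_nonneg u)
              nlinarith
      have := (mul_le_mul_iff_of_pos_right h).mp (by nlinarith : (τ * a) * a ≤ (u ⬝ᵥ u) * a)
      exact this
  -- N (u⬝u) = y⬝y
  have hNuu : (N:ℝ) * (u ⬝ᵥ u) = y ⬝ᵥ y := by
    have h1 : u ⬝ᵥ u = y ⬝ᵥ (P *ᵥ u) := by
      rw [hu]
      rw [show (Pᵀ *ᵥ y) ⬝ᵥ (Pᵀ *ᵥ y) = y ⬝ᵥ (Pᵀᵀ *ᵥ (Pᵀ *ᵥ y)) from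
        mulVec_dot Pᵀ y (Pᵀ *ᵥ y), transpose_transpose]
    rw [h1, mulVec_mulVec]
    have h2 : (N:ℝ) * (y ⬝ᵥ ((P * Pᵀ) *ᵥ y)) = y ⬝ᵥ (((N:ℝ) • (P * Pᵀ)) *ᵥ y) := by
      rw [smul_mulVec, dotProduct_smul, smul_eq_mul]
    rw [h2, hP, one_mulVec]
  -- first inequality, in the form N*a ≤ (1/τ)(y⬝y)
  have key1 : (((N : ℝ) • (P * A⁻¹ * Pᵀ)) *ᵥ y) ⬝ᵥ y = (N:ℝ) * a := by
    rw [smul_mulVec, smul_dotProduct, smul_eq_mul]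
    congr 1
    rw [← mulVec_mulVec, ← mulVec_mulVec, ← hu, ← hw, mulVec_dot, ← hu]
  have h2 : τ * ((N:ℝ) * a) ≤ y ⬝ᵥ y := by
    calc τ * ((N:ℝ) * a) = (N:ℝ) * (τ * a) := by ring
      _ ≤ (N:ℝ) * (u ⬝ᵥ u) := mul_le_mul_of_nonneg_left hτa hN0
      _ = y ⬝ᵥ y := hNuu
  have part1 : (N:ℝ) * a ≤ (1 / τ) * (y ⬝ᵥ y) := by
    rw [one_div, inv_mul_eq_div, le_div_iff₀ hτ]
    nlinarith
  refine ⟨by rw [key1]; exact part1, ?_⟩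
  -- second inequality
  set s : Fin N → ℝ := J *ᵥ w with hs
  have key2 : ((N : ℝ) • (P * J * A⁻¹ * Pᵀ)) *ᵥ y = (N:ℝ) • (P *ᵥ s) := by
    rw [smul_mulVec]
    congr 1
    rw [← mulVec_mulVec, ← mulVec_mulVec, ← mulVec_mulVec, ← hu, ← hw, ← hs]
  set Q : Matrix (Fin N) (Fin N) ℝ := (N:ℝ) • (Pᵀ * P) with hQ
  have hQQ : Q * Q = Q := by
    have : Q * Q = (N:ℝ) • (Pᵀ * (((N:ℝ) • (P * Pᵀ)) * P)) := by
      rw [hQ]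
      simp only [Matrix.smul_mul, Matrix.mul_smul, smul_smul]
      rw [Matrix.mul_assoc, Matrix.mul_assoc]
    rw [this, hP, Matrix.one_mul, ← hQ]
  have hQT : Qᵀ = Q := by
    rw [hQ, transpose_smul, transpose_mul, transpose_transpose]
  set t : Fin N → ℝ := Q *ᵥ s with ht
  have htt : t ⬝ᵥ t = s ⬝ᵥ t := by
    rw [ht, mulVec_dot, hQT, mulVec_mulVec, hQQ]
  have hst : s ⬝ᵥ t ≤ s ⬝ᵥ s := by
    have h := dot_self_nonneg (s - t)
    have hexp : (s - t) ⬝ᵥ (s - t) = s ⬝ᵥ s - s ⬝ᵥ t - (t ⬝ᵥ s - t ⬝ᵥ t) := by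
      rw [sub_dotProduct, dotProduct_sub, dotProduct_sub]
    have hc2 : t ⬝ᵥ s = s ⬝ᵥ t := dotProduct_comm _ _
    rw [hexp, hc2, htt] at h
    linarith
  -- z⬝z = N * (s⬝t)
  have hzz : (((N : ℝ) • (P * J * A⁻¹ * Pᵀ)) *ᵥ y) ⬝ᵥ (((N : ℝ) • (P * J * A⁻¹ * Pᵀ)) *ᵥ y)
      = (N:ℝ) * (s ⬝ᵥ t) := by
    rw [key2, smul_dotProduct, dotProduct_smul, smul_eq_mul, smul_eq_mul]
    have h1 : (P *ᵥ s) ⬝ᵥ (P *ᵥ s) = s ⬝ᵥ ((Pᵀ * P) *ᵥ s) := by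
      rw [mulVec_dot, mulVec_mulVec]
    have h2 : s ⬝ᵥ t = (N:ℝ) * (s ⬝ᵥ ((Pᵀ * P) *ᵥ s)) := by
      rw [ht, hQ, smul_mulVec, dotProduct_smul, smul_eq_mul]
    rw [h1, h2]
  -- s⬝s ≤ c * a
  have hss : s ⬝ᵥ s ≤ c * a := by
    have h1 : s ⬝ᵥ s = - (w ⬝ᵥ ((J * J) *ᵥ w)) := by
      rw [hs, mulVec_dot, hJ_anti, neg_mulVec, dotProduct_neg, mulVec_mulVec]
    have h2 := hJA w
    have h3 : w ⬝ᵥ ((c • A + J * J) *ᵥ w) = c * a + w ⬝ᵥ ((J * J) *ᵥ w) := by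
      rw [add_mulVec, dotProduct_add, smul_mulVec, dotProduct_smul, smul_eq_mul, hAw]
    rw [h3] at h2
    linarith [h1, h2]
  rw [hzz]
  calc (N:ℝ) * (s ⬝ᵥ t) ≤ (N:ℝ) * (s ⬝ᵥ s) := mul_le_mul_of_nonneg_left hst hN0
    _ ≤ (N:ℝ) * (c * a) := mul_le_mul_of_nonneg_left hss hN0
    _ = c * ((N:ℝ) * a) := by ring
    _ ≤ c * ((1 / τ) * (y ⬝ᵥ y)) := mul_le_mul_of_nonneg_left part1 hc.le
    _ = (c / τ) * (y ⬝ᵥ y) := by ring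
end

section
/- Let B be a symmetric positive definite operator on a Euclidean space Y and z, y ∈ Y. Then ⟨Bz, z⟩ = sup over w ∈ Y of (2⟨z, w⟩ - ⟨B⁻¹w, w⟩), and consequently for linear operators Q on Y satisfying |Qw|² ≤ c⟨B⁻¹w, w⟩ for all w, one has ⟨B Qy, Qy⟩ ≤ c|y|². -/
open Matrix

lemma stmt14_sq_nonneg {m : ℕ} (v : Fin m → ℝ) : 0 ≤ v ⬝ᵥ v := by
  apply Finset.sum_nonneg; intro i _; exact mul_self_nonneg _

/-- Dual characterization of a positive definite quadratic form:
⟨Bz, z⟩ = sup_w (2⟨z,w⟩ - ⟨B⁻¹w, w⟩) (the sup being attained), and consequently,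
if |Qᵗw|² ≤ c⟨B⁻¹w, w⟩ for all w, then ⟨BQy, Qy⟩ ≤ c|y|². -/
theorem stmt_14 {m : ℕ} (c : ℝ) (hc : 0 < c)
    (B Binv Q : Matrix (Fin m) (Fin m) ℝ)
    (hB_symm : B.IsSymm)
    (hB_pos : ∀ z : Fin m → ℝ, z ≠ 0 → 0 < z ⬝ᵥ B.mulVec z)
    (hBinv : B * Binv = 1) (hBinv' : Binv * B = 1) :
    (∀ z : Fin m → ℝ,
      IsGreatest {r : ℝ | ∃ w : Fin m → ℝ, r = 2 * (z ⬝ᵥ w) - (Binv.mulVec w) ⬝ᵥ w}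
        ((B.mulVec z) ⬝ᵥ z)) ∧
    ((∀ w : Fin m → ℝ, (Qᵀ.mulVec w) ⬝ᵥ (Qᵀ.mulVec w) ≤ c * ((Binv.mulVec w) ⬝ᵥ w)) →
      ∀ y : Fin m → ℝ, (B.mulVec (Q.mulVec y)) ⬝ᵥ (Q.mulVec y) ≤ c * (y ⬝ᵥ y)) := by
  -- nonnegativity of the quadratic form
  have hnn : ∀ v : Fin m → ℝ, 0 ≤ v ⬝ᵥ B.mulVec v := by
    intro v
    by_cases hv : v = 0
    · simp [hv]
    · exact le_of_lt (hB_pos v hv)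
  -- symmetry of the bilinear form
  have hsym : ∀ x y : Fin m → ℝ, x ⬝ᵥ B.mulVec y = y ⬝ᵥ B.mulVec x := by
    intro x y
    rw [dotProduct_mulVec, ← mulVec_transpose, hB_symm.eq, dotProduct_comm]
  -- B (Binv w) = w
  have hBB : ∀ w : Fin m → ℝ, B.mulVec (Binv.mulVec w) = w := by
    intro w; rw [mulVec_mulVec, hBinv, one_mulVec]
  have hBB' : ∀ w : Fin m → ℝ, Binv.mulVec (B.mulVec w) = w := by
    intro w; rw [mulVec_mulVec, hBinv', one_mulVec]
  -- key inequality
  have key : ∀ z w : Fin m → ℝ,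
      2 * (z ⬝ᵥ w) - (Binv.mulVec w) ⬝ᵥ w ≤ (B.mulVec z) ⬝ᵥ z := by
    intro z w
    have h0 := hnn (z - Binv.mulVec w)
    have hexp : (z - Binv.mulVec w) ⬝ᵥ B.mulVec (z - Binv.mulVec w)
        = z ⬝ᵥ B.mulVec z - 2 * (z ⬝ᵥ w) + (Binv.mulVec w) ⬝ᵥ w := by
      rw [mulVec_sub, dotProduct_sub, sub_dotProduct, sub_dotProduct, hBB,
        hsym (Binv.mulVec w) z, hBB]
      ring
    rw [hexp] at h0
    rw [dotProduct_comm (B.mulVec z) z]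
    linarith
  have hmem : ∀ z : Fin m → ℝ,
      (B.mulVec z) ⬝ᵥ z ∈ {r : ℝ | ∃ w : Fin m → ℝ, r = 2 * (z ⬝ᵥ w) - (Binv.mulVec w) ⬝ᵥ w} := by
    intro z
    refine ⟨B.mulVec z, ?_⟩
    rw [hBB', dotProduct_comm z (B.mulVec z)]
    ring
  constructor
  · intro z
    refine ⟨hmem z, ?_⟩
    rintro r ⟨w, rfl⟩
    exact key z w
  · intro hQ y
    obtain ⟨w, hw⟩ := hmem (Q.mulVec y)
    rw [hw]
    -- Qy ⬝ w = Qᵀw ⬝ y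
    have hQw : (Q.mulVec y) ⬝ᵥ w = (Qᵀ.mulVec w) ⬝ᵥ y := by
      rw [dotProduct_comm, dotProduct_mulVec, ← mulVec_transpose]
    have hsq := stmt14_sq_nonneg (c • y - Qᵀ.mulVec w)
    have hexp : (c • y - Qᵀ.mulVec w) ⬝ᵥ (c • y - Qᵀ.mulVec w)
        = c ^ 2 * (y ⬝ᵥ y) - 2 * c * ((Qᵀ.mulVec w) ⬝ᵥ y) + (Qᵀ.mulVec w) ⬝ᵥ (Qᵀ.mulVec w) := by
      rw [sub_dotProduct, dotProduct_sub, dotProduct_sub, smul_dotProduct, smul_dotProduct,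
        dotProduct_smul, dotProduct_smul, dotProduct_comm y (Qᵀ.mulVec w)]
      simp only [smul_eq_mul]
      ring
    rw [hexp] at hsq
    have hb := hQ w
    rw [hQw]
    nlinarith [hsq, hb]
end

section
/- For x ∈ ℝᴺ (mean zero), let x̄ be the associated step function on the torus: x̄(θ) = xᵢ for θ ∈ [(i-1)/N, i/N), and let A be the N²-scaled discrete periodic Laplacian restricted to the mean-zero subspace. Then there is a universal constant C such that (1/C)‖x̄‖²_{H⁻¹} ≤ (1/N)⟨A⁻¹x, x⟩ ≤ C‖x̄‖²_{H⁻¹} for all N and all mean-zero x; moreover if ‖x̄‖_{L²} ≤ R then |‖x̄‖²_{H⁻¹} - (1/N)⟨A⁻¹x,x⟩| ≤ C(R)/N. -/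
open Matrix intervalIntegral Set
open Fin.NatCast Fin.CommRing

private lemma aff_on (g : ℝ → ℝ) (a b c : ℝ) (hc : ContinuousOn g (Icc a b))
    (hd : ∀ θ ∈ Ioo a b, HasDerivAt g c θ) :
    ∀ θ ∈ Icc a b, g θ = g a + c * (θ - a) := by
  rcases le_or_gt a b with hab | hab
  · set h : ℝ → ℝ := fun θ => g θ - c * θ with hh
    have hder : ∀ θ ∈ Ioo a b, HasDerivAt h 0 θ := by
      intro θ hθ
      have := (hd θ hθ).sub ((hasDerivAt_id θ).const_mul c)
      exact this.congr_deriv (by simp)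
    have hdiff : DifferentiableOn ℝ h (interior (Icc a b)) := by
      rw [interior_Icc]
      exact fun θ hθ => (hder θ hθ).differentiableAt.differentiableWithinAt
    have hch : ContinuousOn h (Icc a b) := hc.sub (continuousOn_const.mul continuousOn_id)
    have hmono : MonotoneOn h (Icc a b) := by
      apply monotoneOn_of_deriv_nonneg (convex_Icc a b) hch hdiff
      intro θ hθ; rw [interior_Icc] at hθ; rw [(hder θ hθ).deriv]
    have hanti : AntitoneOn h (Icc a b) := by
      apply antitoneOn_of_deriv_nonpos (convex_Icc a b) hch hdiff
      intro θ hθ; rw [interior_Icc] at hθ; rw [(hder θ hθ).deriv]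
    intro θ hθ
    have ha : a ∈ Icc a b := ⟨le_refl a, hab⟩
    have h1 := hmono ha hθ hθ.1
    have h2 := hanti ha hθ hθ.1
    have : h θ = h a := le_antisymm h2 h1
    simp only [hh] at this
    linarith
  · intro θ hθ; exact absurd (hθ.1.trans hθ.2) (not_le.2 hab)

private lemma int_aff (a b c₀ c₁ : ℝ) :
    (∫ θ in a..b, (c₀ + c₁ * (θ - a))) = c₀ * (b - a) + c₁ * (b - a) ^ 2 / 2 := by
  have key : ∀ θ : ℝ, HasDerivAt (fun t => c₀ * (t - a) + c₁ * (t - a) ^ 2 / 2)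
      (c₀ + c₁ * (θ - a)) θ := by
    intro θ
    have h1 : HasDerivAt (fun t : ℝ => t - a) 1 θ := (hasDerivAt_id θ).sub_const a
    have h3 := (h1.const_mul c₀).add (((h1.pow 2).const_mul c₁).div_const 2)
    exact h3.congr_deriv (by norm_num; ring)
  rw [intervalIntegral.integral_eq_sub_of_hasDerivAt (fun θ _ => key θ)
    ((Continuous.intervalIntegrable (by continuity) a b))]
  ring

private lemma int_aff_sq (a b c₀ c₁ : ℝ) :
    (∫ θ in a..b, (c₀ + c₁ * (θ - a)) ^ 2)
      = c₀ ^ 2 * (b - a) + c₀ * c₁ * (b - a) ^ 2 + c₁ ^ 2 * (b - a) ^ 3 / 3 := by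
  have key : ∀ θ : ℝ, HasDerivAt
      (fun t => c₀ ^ 2 * (t - a) + c₀ * c₁ * (t - a) ^ 2 + c₁ ^ 2 * (t - a) ^ 3 / 3)
      ((c₀ + c₁ * (θ - a)) ^ 2) θ := by
    intro θ
    have h1 : HasDerivAt (fun t : ℝ => t - a) 1 θ := (hasDerivAt_id θ).sub_const a
    have h3 := ((h1.const_mul (c₀ ^ 2)).add ((h1.pow 2).const_mul (c₀ * c₁))).add
      (((h1.pow 3).const_mul (c₁ ^ 2)).div_const 3)
    exact h3.congr_deriv (by norm_num; ring)
  rw [intervalIntegral.integral_eq_sub_of_hasDerivAt (fun θ _ => key θ)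
    ((Continuous.intervalIntegrable (by continuity) a b))]
  ring

private lemma sum_shift {N : ℕ} [NeZero N] (f : Fin N → ℝ) : ∑ i, f (i + 1) = ∑ i, f i :=
  Fintype.sum_equiv (Equiv.addRight 1) _ _ (fun _ => rfl)

private lemma fin_val_succ {N : ℕ} [NeZero N] (i : Fin N) :
    ((i + 1 : Fin N) : ℕ) = ((i : ℕ) + 1) % N := by
  rw [Fin.add_def]; simp [Fin.val_one']

/-- Lemma 4.3 (norm comparison, GOVW09 §6.3): for mean-zero x ∈ ℝᴺ with associated
step function x̄ (whose mean-zero primitive is g, so ‖x̄‖²_{H⁻¹} = ∫₀¹g²) and A the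
N²-scaled discrete periodic Laplacian (with A z = x, z mean zero, so
⟨A⁻¹x, x⟩ = ⟨z, x⟩), one has (1/C)‖x̄‖²_{H⁻¹} ≤ (1/N)⟨A⁻¹x,x⟩ ≤ C‖x̄‖²_{H⁻¹}
with a universal constant C; and if ‖x̄‖_{L²} ≤ R then
|‖x̄‖²_{H⁻¹} - (1/N)⟨A⁻¹x,x⟩| ≤ C(R)/N. -/
theorem stmt_17 :
    ∃ C > (0:ℝ), ∃ C' : ℝ → ℝ,
      ∀ (N : ℕ) [NeZero N] (x z : Fin N → ℝ) (g : ℝ → ℝ),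
        (∑ i, x i) = 0 →
        (∑ i, z i) = 0 →
        -- z = A⁻¹ x for the scaled discrete periodic Laplacian A
        (∀ i : Fin N, (N : ℝ) ^ 2 * (2 * z i - z (i + 1) - z (i - 1)) = x i) →
        -- g is the mean-zero primitive of the step function x̄ of x
        ContinuousOn g (Set.Icc 0 1) →
        (∀ i : Fin N, ∀ θ ∈ Set.Ioo ((i : ℝ) / N) (((i : ℝ) + 1) / N),
          HasDerivAt g (x i) θ) →
        (∫ θ in (0:ℝ)..1, g θ) = 0 →
        ((1 / C) * ∫ θ in (0:ℝ)..1, (g θ) ^ 2 ≤ (1 / (N : ℝ)) * (z ⬝ᵥ x) ∧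
         (1 / (N : ℝ)) * (z ⬝ᵥ x) ≤ C * ∫ θ in (0:ℝ)..1, (g θ) ^ 2) ∧
        (∀ R : ℝ, (1 / (N : ℝ)) * (∑ i, (x i) ^ 2) ≤ R ^ 2 →
          |(∫ θ in (0:ℝ)..1, (g θ) ^ 2) - (1 / (N : ℝ)) * (z ⬝ᵥ x)| ≤ C' R / N) := by
  refine ⟨3, by norm_num, fun R => R ^ 2 / 6, ?_⟩
  intro N _ x z g hx hz hA hgc hgd hgint
  have hNn : (0:ℕ) < N := Nat.pos_of_ne_zero (NeZero.ne N)
  have hN0 : (0:ℝ) < N := by exact_mod_cast hNn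
  have hN1 : (1:ℝ) ≤ N := by exact_mod_cast hNn
  set G : Fin N → ℝ := fun i => g ((i : ℝ) / N) with hG
  -- interval inclusion
  have hsub : ∀ i : Fin N, Icc ((i:ℝ)/N) (((i:ℝ)+1)/N) ⊆ Icc (0:ℝ) 1 := by
    intro i
    apply Icc_subset_Icc
    · positivity
    · rw [div_le_one hN0]
      have : ((i:ℕ):ℝ) + 1 ≤ N := by exact_mod_cast i.isLt
      exact this
  have hab : ∀ i : Fin N, ((i:ℝ)/N) ≤ (((i:ℝ)+1)/N) := by
    intro i; gcongr; linarith
  have hform : ∀ i : Fin N, ∀ θ ∈ Icc ((i:ℝ)/N) (((i:ℝ)+1)/N),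
      g θ = G i + x i * (θ - (i:ℝ)/N) :=
    fun i => aff_on g _ _ _ (hgc.mono (hsub i)) (hgd i)
  -- per-interval integrals
  have hint1 : ∀ i : Fin N, (∫ θ in ((i:ℝ)/N)..(((i:ℝ)+1)/N), g θ)
      = G i / N + x i / (2 * N ^ 2) := by
    intro i
    rw [intervalIntegral.integral_congr (g := fun θ => G i + x i * (θ - (i:ℝ)/N))
      (by rw [uIcc_of_le (hab i)]; exact fun θ hθ => hform i θ hθ)]
    rw [int_aff]
    have : ((i:ℝ)+1)/N - (i:ℝ)/N = 1/N := by field_simp; ring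
    rw [this]
    field_simp
  have hint2 : ∀ i : Fin N, (∫ θ in ((i:ℝ)/N)..(((i:ℝ)+1)/N), (g θ) ^ 2)
      = (G i) ^ 2 / N + G i * x i / N ^ 2 + (x i) ^ 2 / (3 * N ^ 3) := by
    intro i
    rw [intervalIntegral.integral_congr (g := fun θ => (G i + x i * (θ - (i:ℝ)/N)) ^ 2)
      (by rw [uIcc_of_le (hab i)]; exact fun θ hθ => by show g θ ^ 2 = _; rw [hform i θ hθ])]
    rw [int_aff_sq]
    have : ((i:ℝ)+1)/N - (i:ℝ)/N = 1/N := by field_simp; ring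
    rw [this]
    field_simp
  -- splitting the integral
  have hIcc : ∀ k : ℕ, k < N → uIcc ((k:ℝ)/N) ((k+1:ℝ)/N) ⊆ Icc (0:ℝ) 1 := by
    intro k hk
    have h1 : ((k:ℝ)+1) ≤ N := by exact_mod_cast hk
    rw [uIcc_of_le (by gcongr; linarith)]
    apply Icc_subset_Icc
    · positivity
    · rw [div_le_one hN0]; push_cast; linarith
  have hcast : ∀ k : ℕ, k < N → (((k : Fin N) : ℝ)) = (k : ℝ) := by
    intro k hk
    norm_cast
    exact Fin.val_cast_of_lt hk
  have hsplit : ∀ f : ℝ → ℝ, ContinuousOn f (Icc (0:ℝ) 1) →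
      ∑ k ∈ Finset.range N, (∫ θ in ((k:ℝ)/N)..(((k:ℝ)+1)/N), f θ)
        = ∫ θ in (0:ℝ)..1, f θ := by
    intro f hf
    have := intervalIntegral.sum_integral_adjacent_intervals (μ := MeasureTheory.volume)
      (a := fun k : ℕ => (k:ℝ)/N) (n := N) (f := f) ?_
    · rw [show (((0:ℕ):ℝ))/N = 0 by simp, show (((N:ℕ)):ℝ)/N = 1 from div_self hN0.ne'] at this
      rw [← this]
      apply Finset.sum_congr rfl
      intro k _
      norm_num
    · intro k hk
      exact (hf.mono (by push_cast; exact hIcc k hk)).intervalIntegrable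
  -- integral of g and g^2 as Fin sums
  have e2 : (∫ θ in (0:ℝ)..1, (g θ) ^ 2)
      = ∑ i : Fin N, ((G i) ^ 2 / N + G i * x i / N ^ 2 + (x i) ^ 2 / (3 * N ^ 3)) := by
    rw [← hsplit (fun θ => (g θ) ^ 2) (hgc.pow 2),
      ← Fin.sum_univ_eq_sum_range (fun k => ∫ θ in ((k:ℝ)/N)..(((k:ℝ)+1)/N), (g θ) ^ 2) N]
    exact Finset.sum_congr rfl (fun i _ => hint2 i)
  have e1 : (0:ℝ) = ∑ i : Fin N, (G i / N + x i / (2 * N ^ 2)) := by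
    rw [← hgint, ← hsplit g hgc,
      ← Fin.sum_univ_eq_sum_range (fun k => ∫ θ in ((k:ℝ)/N)..(((k:ℝ)+1)/N), g θ) N]
    exact Finset.sum_congr rfl (fun i _ => hint1 i)
  have hsumG : ∑ i, G i = 0 := by
    have h1 : ∑ i : Fin N, (G i / N + x i / (2 * N ^ 2))
        = (∑ i, G i) / N + (∑ i, x i) / (2 * N ^ 2) := by
      rw [Finset.sum_add_distrib, Finset.sum_div, Finset.sum_div]
    rw [h1, hx] at e1
    have := e1.symm
    field_simp at this
    simpa [hN0.ne'] using this
  -- telescoping: g 1 = g 0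
  have tele : ∀ m : ℕ, m ≤ N →
      g ((m:ℝ)/N) = g 0 + (∑ k ∈ Finset.range m, x (k : Fin N)) / N := by
    intro m
    induction m with
    | zero => intro _; simp
    | succ m ih =>
      intro hm
      have hmN : m < N := hm
      have hc := hcast m hmN
      have hb := hform (m : Fin N) ((((m:Fin N):ℝ)+1)/N) ⟨hab _, le_refl _⟩
      rw [hc] at hb
      have hrw : ((m+1 : ℕ):ℝ) / N = ((m:ℝ)+1)/N := by push_cast; ring
      rw [hrw, hb, Finset.sum_range_succ]
      have hGm : G (m : Fin N) = g ((m:ℝ)/N) := by simp only [hG]; rw [hc]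
      rw [hGm, ih (le_of_lt hmN)]
      field_simp
      ring
  have hg01 : g 1 = g 0 := by
    have h1 := tele N le_rfl
    rw [div_self hN0.ne'] at h1
    have h2 : ∑ k ∈ Finset.range N, x (k : Fin N) = ∑ i : Fin N, x i := by
      rw [← Fin.sum_univ_eq_sum_range (fun k => x (k : Fin N)) N]
      exact Finset.sum_congr rfl (fun i _ => by rw [Fin.cast_val_eq_self])
    rw [h2, hx] at h1
    simpa using h1
  -- the cyclic recurrence for G
  have hGrec : ∀ i : Fin N, G (i + 1) = G i + x i / N := by
    intro i
    have hb := hform i (((i:ℝ)+1)/N) ⟨hab i, le_refl _⟩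
    have hdiff : ((i:ℝ)+1)/N - (i:ℝ)/N = 1/N := by field_simp; ring
    rw [hdiff] at hb
    rcases lt_or_eq_of_le (Nat.succ_le_of_lt i.isLt) with h | h
    · have hv : ((i + 1 : Fin N) : ℕ) = (i:ℕ) + 1 := by
        rw [fin_val_succ]; exact Nat.mod_eq_of_lt h
      have hvr : ((i + 1 : Fin N) : ℝ) = (i:ℝ) + 1 := by
        show (((i + 1 : Fin N):ℕ):ℝ) = _
        rw [hv]; push_cast; ring
      show g (((i + 1 : Fin N) : ℝ)/N) = _
      rw [hvr, hb]; ring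
    · have hv : ((i + 1 : Fin N) : ℕ) = 0 := by
        rw [fin_val_succ, ← Nat.succ_eq_add_one, h, Nat.mod_self]
      have hvr : ((i + 1 : Fin N) : ℝ) = 0 := by
        show (((i + 1 : Fin N):ℕ):ℝ) = _
        rw [hv]; norm_num
      have h1 : ((i:ℝ)+1)/N = 1 := by
        have : ((i:ℝ)+1) = (N:ℝ) := by exact_mod_cast congrArg (Nat.cast : ℕ → ℝ) h
        rw [this, div_self hN0.ne']
      rw [h1] at hb
      show g (((i + 1 : Fin N) : ℝ)/N) = _
      rw [hvr, zero_div, ← hg01, hb]; ring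
  have hxG : ∀ i : Fin N, x i = N * (G (i + 1) - G i) := by
    intro i
    rw [hGrec i, show G i + x i / (N:ℝ) - G i = x i / N from by ring, mul_comm,
      div_mul_cancel₀ _ hN0.ne']
  -- D i = G i - N (z(i-1) - z i) is constant, zero
  set D : Fin N → ℝ := fun i => G i - N * (z (i - 1) - z i) with hD
  have hDstep : ∀ i : Fin N, D (i + 1) = D i := by
    intro i
    simp only [hD]
    rw [hGrec i, show (i + 1 - 1 : Fin N) = i from by ring]
    have h2 : x i / (N:ℝ) = N * (2 * z i - z (i + 1) - z (i - 1)) := by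
      rw [div_eq_iff hN0.ne', ← hA i]; ring
    linarith [h2]
  have hDconst : ∀ i : Fin N, D i = D 0 := by
    have key : ∀ k : ℕ, D (k : Fin N) = D 0 := by
      intro k
      induction k with
      | zero => norm_num
      | succ k ih => rw [show ((k + 1 : ℕ) : Fin N) = (k : Fin N) + 1 from by push_cast; ring,
          hDstep, ih]
    intro i
    calc D i = D (((i:ℕ)) : Fin N) := by rw [Fin.cast_val_eq_self]
    _ = D 0 := key _
  have hzshift : ∑ i : Fin N, z (i - 1) = ∑ i, z i := by
    have := sum_shift (N := N) (fun j => z (j - 1))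
    simp only [add_sub_cancel_right] at this
    exact this.symm
  have hsumD : ∑ i, D i = 0 := by
    simp only [hD]
    rw [Finset.sum_sub_distrib, ← Finset.mul_sum, Finset.sum_sub_distrib, hzshift, hsumG, hz]
    ring
  have hD0 : D 0 = 0 := by
    have h1 : ∑ i : Fin N, D i = N * D 0 := by
      rw [Finset.sum_congr rfl (fun i _ => hDconst i), Finset.sum_const, Finset.card_univ,
        Fintype.card_fin, nsmul_eq_mul]
    rw [hsumD] at h1
    have := h1.symm
    exact (mul_eq_zero.1 this).resolve_left hN0.ne'
  have hGz : ∀ i : Fin N, G i = N * (z (i - 1) - z i) := by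
    intro i
    have h1 := hDconst i
    rw [hD0] at h1
    simp only [hD] at h1
    linarith
  -- key identities
  have key1 : z ⬝ᵥ x = ∑ i, (G i) ^ 2 := by
    set φ : Fin N → ℝ := fun i => (N:ℝ) ^ 2 * ((z (i - 1)) ^ 2 - z (i - 1) * z i) with hφ
    have hterm : ∀ i : Fin N, z i * x i - (G i) ^ 2 = φ (i + 1) - φ i := by
      intro i
      rw [← hA i, hGz i]
      simp only [hφ, add_sub_cancel_right]
      ring
    have h1 : ∑ i : Fin N, (z i * x i - (G i) ^ 2) = 0 := by
      rw [Finset.sum_congr rfl (fun i _ => hterm i), Finset.sum_sub_distrib, sum_shift φ,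
        sub_self]
    rw [Finset.sum_sub_distrib] at h1
    show ∑ i, z i * x i = _
    linarith
  have key2 : 2 * (N:ℝ) * ∑ i, G i * x i = - ∑ i, (x i) ^ 2 := by
    set ψ : Fin N → ℝ := fun i => (N:ℝ) ^ 2 * (G i) ^ 2 with hψ
    have hterm : ∀ i : Fin N, 2 * (N:ℝ) * (G i * x i) + (x i) ^ 2 = ψ (i + 1) - ψ i := by
      intro i
      rw [hxG i]
      simp only [hψ]
      ring
    have h1 : ∑ i : Fin N, (2 * (N:ℝ) * (G i * x i) + (x i) ^ 2) = 0 := by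
      rw [Finset.sum_congr rfl (fun i _ => hterm i), Finset.sum_sub_distrib, sum_shift ψ,
        sub_self]
    rw [Finset.sum_add_distrib, ← Finset.mul_sum] at h1
    linarith
  have key3 : ∑ i, (x i) ^ 2 ≤ 4 * (N:ℝ) ^ 2 * ∑ i, (G i) ^ 2 := by
    have h1 : ∑ i, (x i) ^ 2
        ≤ ∑ i : Fin N, (2 * (N:ℝ) ^ 2 * (G (i + 1)) ^ 2 + 2 * (N:ℝ) ^ 2 * (G i) ^ 2) :=
      Finset.sum_le_sum (fun i _ => by rw [hxG i]; nlinarith [sq_nonneg (G (i + 1) + G i)])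
    rw [Finset.sum_add_distrib, ← Finset.mul_sum, ← Finset.mul_sum,
      sum_shift (fun i => (G i) ^ 2)] at h1
    linarith
  -- assembly
  set S : ℝ := ∑ i, (G i) ^ 2 with hS
  set Q : ℝ := ∑ i, (x i) ^ 2 with hQ
  have hS0 : 0 ≤ S := Finset.sum_nonneg (fun i _ => sq_nonneg _)
  have hQ0 : 0 ≤ Q := Finset.sum_nonneg (fun i _ => sq_nonneg _)
  have hGx : ∑ i, G i * x i = - Q / (2 * N) := by
    field_simp
    linarith [key2]
  have hI : (∫ θ in (0:ℝ)..1, (g θ) ^ 2) = S / N - Q / (6 * N ^ 3) := by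
    rw [e2, Finset.sum_add_distrib, Finset.sum_add_distrib, ← Finset.sum_div, ← Finset.sum_div,
      ← Finset.sum_div, hGx, ← hS, ← hQ]
    field_simp
    ring
  have hInt0 : (0:ℝ) ≤ ∫ θ in (0:ℝ)..1, (g θ) ^ 2 :=
    intervalIntegral.integral_nonneg (by norm_num) (fun θ _ => sq_nonneg _)
  rw [hI] at hInt0
  have hQ6 : (0:ℝ) ≤ Q / (6 * N ^ 3) := by positivity
  refine ⟨⟨?_, ?_⟩, ?_⟩
  · rw [key1, hI]
    have h3 : 1 / (N:ℝ) * S = S / N := by ring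
    rw [h3]
    linarith
  · rw [key1, hI]
    have h4 : Q / (6 * N ^ 3) ≤ (4 * N ^ 2 * S) / (6 * N ^ 3) := by
      gcongr
    have h5 : (4 * (N:ℝ) ^ 2 * S) / (6 * N ^ 3) = (2 / 3) * (S / N) := by
      field_simp; ring
    rw [h5] at h4
    have h3 : 1 / (N:ℝ) * S = S / N := by ring
    rw [h3]
    linarith
  · intro R hR
    rw [key1, hI]
    have hrw : S / N - Q / (6 * N ^ 3) - 1 / N * S = -(Q / (6 * N ^ 3)) := by ring
    rw [hrw, abs_neg, abs_of_nonneg hQ6]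
    have hQR : Q ≤ N * R ^ 2 := by
      have h1 := mul_le_mul_of_nonneg_left hR hN0.le
      rw [show (N:ℝ) * (1 / N * Q) = Q from by
        rw [one_div, ← mul_assoc, mul_inv_cancel₀ hN0.ne', one_mul]] at h1
      exact h1
    have hR0 : (0:ℝ) ≤ R ^ 2 := sq_nonneg R
    show Q / (6 * (N:ℝ) ^ 3) ≤ R ^ 2 / 6 / N
    rw [div_le_div_iff₀ (by positivity) hN0]
    have h2 : Q * N ≤ N ^ 2 * R ^ 2 := by
      calc Q * N ≤ (N * R ^ 2) * N := mul_le_mul_of_nonneg_right hQR hN0.le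
      _ = N ^ 2 * R ^ 2 := by ring
    have h3 : (N:ℝ) ^ 2 * R ^ 2 ≤ N ^ 3 * R ^ 2 :=
      mul_le_mul_of_nonneg_right (pow_le_pow_right₀ hN1 (by norm_num)) hR0
    calc Q * N ≤ (N:ℝ) ^ 3 * R ^ 2 := by linarith
    _ = R ^ 2 / 6 * (6 * N ^ 3) := by ring
end
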